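/- In the Bruhat-Tits tree for PGL_2(K_∞), the distance between the vertices [L(n,g)] and [L(0,0)] equals deg_n(g) + |n - deg_n(g)|, where deg_n(g) = min{ i ≥ 0 : g ∈ π^{n-i} O_∞ }. -/

import Mathlib

set_option synthInstance.maxHeartbeats 1000000
set_option maxHeartbeats 1000000
set_option linter.unusedSectionVars false

noncomputable section
open LaurentSeries HahnSeries Polynomial

variable (F : Type) [Field F] [Fintype F]

/-- `K_∞ = 𝔽_q((π))`, the field of formal Laurent series. -/
abbrev KK := LaurentSeries F

/-- `𝒪_∞ = 𝔽_q[[π]]`, the ring of integers of `K_∞`. -/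
def OO : Subring (KK F) := (HahnSeries.ofPowerSeries ℤ F).range

/-- `π^n` for `n : ℤ`. -/
def pZ (n : ℤ) : KK F := HahnSeries.single n 1

/-- The ambient two-dimensional vector space `K_∞²`. -/
abbrev VV := Fin 2 → KK F

/-- An `𝒪_∞`-lattice in `K_∞²`: a finitely generated `𝒪_∞`-submodule spanning `K_∞²`. -/
def IsLat (L : Submodule (OO F) (VV F)) : Prop :=
  L.FG ∧ Submodule.span (KK F) (L : Set (VV F)) = ⊤

/-- Homothety of lattices: `L' = c • L` for some `c ∈ K_∞ˣ`. -/
def LatEq (L L' : Submodule (OO F) (VV F)) : Prop :=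
  ∃ c : (KK F)ˣ, (L' : Set (VV F)) = (fun v => (c : KK F) • v) '' (L : Set (VV F))

/-- The type of lattices. -/
abbrev LatT := {L : Submodule (OO F) (VV F) // IsLat F L}

/-- Vertices of the Bruhat–Tits tree: homothety classes of lattices. -/
abbrev Vertex := Quot (fun L L' : LatT F => LatEq F L.1 L'.1)

/-- The class of a lattice. -/
def vtx (L : LatT F) : Vertex F := Quot.mk _ L

/-- The lattice `c • L`. -/
def scaleLat (c : KK F) (L : Submodule (OO F) (VV F)) : Submodule (OO F) (VV F) :=
  Submodule.span (OO F) ((fun v => c • v) '' (L : Set (VV F)))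

/-- There are representatives `L, L'` with `πL ⊊ L' ⊊ L`. -/
def AdjAux (x y : Vertex F) : Prop :=
  ∃ L L' : LatT F, vtx F L = x ∧ vtx F L' = y ∧
    scaleLat F (pZ F 1) L.1 < L'.1 ∧ L'.1 < L.1

/-- The Bruhat–Tits tree of `PGL₂(K_∞)`. -/
def BT : SimpleGraph (Vertex F) where
  Adj x y := x ≠ y ∧ (AdjAux F x y ∨ AdjAux F y x)
  symm := ⟨fun _ _ h => ⟨h.1.symm, h.2.symm⟩⟩
  loopless := ⟨fun _ h => h.1 rfl⟩

/-- The lattice `L(n,g)` spanned by `(π^n, 0)ᵗ` and `(g, 1)ᵗ`. -/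
def Llat (n : ℤ) (g : KK F) : Submodule (OO F) (VV F) :=
  Submodule.span (OO F) {![pZ F n, 0], ![g, 1]}

/-- `deg_n(g) = min { i ≥ 0 : g ∈ π^(n-i) 𝒪_∞ }`. -/
def degn (n : ℤ) (g : KK F) : ℕ := sInf {i : ℕ | pZ F (-(n - i)) * g ∈ OO F}


-- ### auxiliary lemmas
section Aux

variable {F}

theorem mem_OO_iff {x : KK F} : x ∈ OO F ↔ ∀ i : ℤ, i < 0 → x.coeff i = 0 := by
  constructor
  · rintro ⟨p, rfl⟩ i hi
    rw [HahnSeries.ofPowerSeries_apply, HahnSeries.embDomain_notin_range]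
    simp only [Set.mem_range, RelEmbedding.coe_mk, Function.Embedding.coeFn_mk]
    rintro ⟨m, hm⟩; have : (0:ℤ) ≤ Nat.castOrderEmbedding m := Nat.cast_nonneg m; omega
  · intro hx
    refine ⟨PowerSeries.mk (fun n => x.coeff n), ?_⟩
    ext i
    rcases lt_or_ge i 0 with hi | hi
    · rw [hx i hi]
      rw [HahnSeries.ofPowerSeries_apply, HahnSeries.embDomain_notin_range]
      simp only [Set.mem_range, RelEmbedding.coe_mk, Function.Embedding.coeFn_mk]
      rintro ⟨m, hm⟩; have : (0:ℤ) ≤ Nat.castOrderEmbedding m := Nat.cast_nonneg m; omega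
    · obtain ⟨m, rfl⟩ := Int.eq_ofNat_of_zero_le hi
      rw [HahnSeries.ofPowerSeries_apply_coeff, PowerSeries.coeff_mk]

theorem pZ_mul (a b : ℤ) : pZ F a * pZ F b = pZ F (a + b) := by
  rw [pZ, pZ, pZ, HahnSeries.single_mul_single, one_mul]

theorem pZ_zero : pZ F 0 = 1 := by
  rw [pZ]; exact HahnSeries.single_zero_one

theorem pZ_ne_zero (a : ℤ) : pZ F a ≠ 0 := HahnSeries.single_ne_zero one_ne_zero

theorem pZ_order (a : ℤ) : (pZ F a).order = a := HahnSeries.order_single one_ne_zero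

theorem pZ_mul_inv (a : ℤ) : pZ F a * pZ F (-a) = 1 := by
  rw [pZ_mul, add_neg_cancel, pZ_zero]

theorem pZ_inv (a : ℤ) : (pZ F a)⁻¹ = pZ F (-a) :=
  inv_eq_of_mul_eq_one_right (pZ_mul_inv a)

theorem pZ_coeff (a b : ℤ) : (pZ F a).coeff b = if b = a then 1 else 0 := by
  simp [pZ, HahnSeries.coeff_single]

theorem pZ_mem_iff {m : ℤ} : pZ F m ∈ OO F ↔ 0 ≤ m := by
  constructor
  · intro h
    by_contra hm
    have := mem_OO_iff.mp h m (by omega)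
    rw [pZ_coeff, if_pos rfl] at this
    exact one_ne_zero this
  · intro h
    rw [mem_OO_iff]
    intro i hi
    rw [pZ_coeff, if_neg (by omega)]

theorem pZ_mem (m : ℤ) (hm : 0 ≤ m) : pZ F m ∈ OO F := pZ_mem_iff.mpr hm

theorem pZ_mul_mem_iff {k : ℤ} {g : KK F} (hg : g ≠ 0) :
    pZ F k * g ∈ OO F ↔ 0 ≤ k + g.order := by
  constructor
  · intro h
    by_contra hko
    have h1 := mem_OO_iff.mp h (g.order + k) (by omega)
    rw [pZ, HahnSeries.coeff_single_mul_add, one_mul] at h1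
    exact hg (HahnSeries.coeff_order_eq_zero.mp h1)
  · intro h
    rw [mem_OO_iff]
    intro i hi
    rw [show i = (i - k) + k by ring, pZ, HahnSeries.coeff_single_mul_add, one_mul]
    exact HahnSeries.coeff_eq_zero_of_lt_order (by omega)

theorem scal_up {k k' : ℤ} {z : KK F} (h : pZ F k * z ∈ OO F) (hk : k ≤ k') :
    pZ F k' * z ∈ OO F := by
  have : pZ F k' * z = pZ F (k' - k) * (pZ F k * z) := by
    rw [← mul_assoc, pZ_mul, sub_add_cancel]
  rw [this]
  exact mul_mem (pZ_mem _ (by omega)) h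

theorem exists_scal (z : KK F) : ∃ k : ℤ, pZ F k * z ∈ OO F := by
  by_cases hz : z = 0
  · exact ⟨0, by rw [hz, mul_zero]; exact zero_mem _⟩
  · exact ⟨-z.order, (pZ_mul_mem_iff hz).mpr (by omega)⟩

theorem exists_OO_inv (c : KK F) (hc : c ≠ 0) :
    ∃ u u' : KK F, u ∈ OO F ∧ u' ∈ OO F ∧ u * u' = 1 ∧ u = pZ F (-c.order) * c ∧
      c * u' = pZ F c.order := by
  have hconst : PowerSeries.constantCoeff c.powerSeriesPart ≠ 0 := by
    rw [← PowerSeries.coeff_zero_eq_constantCoeff_apply, LaurentSeries.powerSeriesPart_coeff]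
    rw [Nat.cast_zero, add_zero]
    exact fun h => hc (HahnSeries.coeff_order_eq_zero.mp h)
  refine ⟨HahnSeries.ofPowerSeries ℤ F c.powerSeriesPart,
    HahnSeries.ofPowerSeries ℤ F (c.powerSeriesPart)⁻¹, ⟨_, rfl⟩, ⟨_, rfl⟩, ?_, ?_, ?_⟩
  · rw [← map_mul, PowerSeries.mul_inv_cancel _ hconst, map_one]
  · exact LaurentSeries.ofPowerSeries_powerSeriesPart c
  · have h1 : HahnSeries.ofPowerSeries ℤ F c.powerSeriesPart = pZ F (-c.order) * c :=
      LaurentSeries.ofPowerSeries_powerSeriesPart c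
    have h2 : (HahnSeries.ofPowerSeries ℤ F c.powerSeriesPart) *
        (HahnSeries.ofPowerSeries ℤ F (c.powerSeriesPart)⁻¹) = 1 := by
      rw [← map_mul, PowerSeries.mul_inv_cancel _ hconst, map_one]
    rw [h1] at h2
    calc c * (HahnSeries.ofPowerSeries ℤ F (c.powerSeriesPart)⁻¹)
        = pZ F c.order * (pZ F (-c.order) * c * (HahnSeries.ofPowerSeries ℤ F (c.powerSeriesPart)⁻¹)) := by
          rw [← mul_assoc, ← mul_assoc, pZ_mul_inv, one_mul]
      _ = pZ F c.order := by rw [h2, mul_one]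


-- ### chunk 2 : membership in lattices

theorem Ksmul_comp (c : KK F) (x : VV F) (i : Fin 2) : (c • x) i = c * x i := rfl

theorem OOsmul_scalar (b : OO F) (z : KK F) : b • z = (b : KK F) * z := rfl

theorem OOsmul_eq (c : KK F) (h : c ∈ OO F) (x : VV F) :
    (⟨c, h⟩ : OO F) • x = c • x := rfl

theorem smul_mem_of_mem_OO {c : KK F} (h : c ∈ OO F) {L : Submodule (OO F) (VV F)}
    {x : VV F} (hx : x ∈ L) : c • x ∈ L := by
  have := L.smul_mem ⟨c, h⟩ hx
  rwa [OOsmul_eq] at this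

theorem mem_Llat_iff {n : ℤ} {g : KK F} {x : VV F} :
    x ∈ Llat F n g ↔ x 1 ∈ OO F ∧ pZ F (-n) * (x 0 - g * x 1) ∈ OO F := by
  rw [Llat, Submodule.mem_span_pair]
  constructor
  · rintro ⟨a, b, rfl⟩
    have h1 : ((a : OO F) • ![pZ F n, 0] + (b : OO F) • ![g, 1]) 1 = (b : KK F) := by
      simp [Ksmul_comp, OOsmul_scalar, Pi.add_apply]
    have h0 : ((a : OO F) • ![pZ F n, 0] + (b : OO F) • ![g, 1]) 0
        = (a : KK F) * pZ F n + (b : KK F) * g := by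
      simp [Ksmul_comp, OOsmul_scalar, Pi.add_apply]
    rw [h1, h0]
    refine ⟨b.2, ?_⟩
    have e : pZ F (-n) * ((a : KK F) * pZ F n + (b : KK F) * g - g * (b : KK F))
        = (a : KK F) * (pZ F (-n) * pZ F n) := by ring
    rw [e, pZ_mul, neg_add_cancel, pZ_zero, mul_one]
    exact a.2
  · rintro ⟨h1, h2⟩
    refine ⟨⟨pZ F (-n) * (x 0 - g * x 1), h2⟩, ⟨x 1, h1⟩, ?_⟩
    funext i
    have hpp : pZ F (-n) * (x 0 - g * x 1) * pZ F n = x 0 - g * x 1 := by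
      rw [mul_comm (pZ F (-n)) _, mul_assoc, pZ_mul, neg_add_cancel, pZ_zero, mul_one]
    fin_cases i <;>
      simp only [Pi.add_apply, Ksmul_comp, OOsmul_scalar, OOsmul_eq, Fin.zero_eta, Fin.mk_one, Matrix.cons_val_zero, Matrix.cons_val_one,
        Matrix.head_cons]
    · linear_combination hpp
    · ring

theorem mem_M0_iff {x : VV F} : x ∈ Llat F 0 0 ↔ x 0 ∈ OO F ∧ x 1 ∈ OO F := by
  rw [mem_Llat_iff, neg_zero, pZ_zero, zero_mul, sub_zero, one_mul, and_comm]

theorem vec_comb (n : ℤ) (g : KK F) (x : VV F) :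
    x = (pZ F (-n) * (x 0 - g * x 1)) • ![pZ F n, 0] + (x 1) • ![g, 1] := by
  funext i
  have hpp : pZ F (-n) * (x 0 - g * x 1) * pZ F n = x 0 - g * x 1 := by
    rw [mul_comm (pZ F (-n)) _, mul_assoc, pZ_mul, neg_add_cancel, pZ_zero, mul_one]
  fin_cases i <;>
    simp only [Pi.add_apply, Ksmul_comp, OOsmul_scalar, Fin.zero_eta, Fin.mk_one, Matrix.cons_val_zero, Matrix.cons_val_one,
      Matrix.head_cons]
  · linear_combination -hpp
  · ring

theorem isLat_Llat (n : ℤ) (g : KK F) : IsLat F (Llat F n g) := by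
  constructor
  · exact Submodule.fg_span (Set.toFinite _)
  · rw [eq_top_iff]
    intro x _
    have m1 : (![pZ F n, 0] : VV F) ∈ (Llat F n g : Set (VV F)) :=
      Submodule.subset_span (Set.mem_insert _ _)
    have m2 : (![g, 1] : VV F) ∈ (Llat F n g : Set (VV F)) :=
      Submodule.subset_span (Set.mem_insert_of_mem _ rfl)
    rw [vec_comb n g x]
    exact Submodule.add_mem _
      (Submodule.smul_mem _ _ (Submodule.subset_span m1))
      (Submodule.smul_mem _ _ (Submodule.subset_span m2))

theorem Llat_congr {m : ℤ} {g : KK F} (h : pZ F (-m) * g ∈ OO F) :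
    Llat F m g = Llat F m 0 := by
  ext x
  rw [mem_Llat_iff, mem_Llat_iff]
  have key : pZ F (-m) * (x 0 - 0 * x 1)
      = pZ F (-m) * (x 0 - g * x 1) + (pZ F (-m) * g) * x 1 := by ring
  constructor
  · rintro ⟨h1, h2⟩
    refine ⟨h1, ?_⟩
    rw [key]
    exact add_mem h2 (mul_mem h h1)
  · rintro ⟨h1, h2⟩
    refine ⟨h1, ?_⟩
    have key2 : pZ F (-m) * (x 0 - g * x 1)
        = pZ F (-m) * (x 0 - 0 * x 1) - (pZ F (-m) * g) * x 1 := by ring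
    rw [key2]
    exact sub_mem h2 (mul_mem h h1)

-- ### chunk 3 : scaleLat and the invariant aInv

variable (F) in
/-- Multiplication by a scalar of `K` as an `O`-linear map. -/
def mulK (c : KK F) : VV F →ₗ[OO F] VV F where
  toFun v := c • v
  map_add' v w := smul_add c v w
  map_smul' r v := by
    funext i
    show c * ((r : KK F) * v i) = (r : KK F) * (c * v i)
    ring

theorem mulK_apply (c : KK F) (v : VV F) : mulK F c v = c • v := rfl

theorem scaleLat_eq_map (c : KK F) (L : Submodule (OO F) (VV F)) :
    scaleLat F c L = L.map (mulK F c) := by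
  rw [scaleLat, show ((fun v => c • v) '' (L : Set (VV F))) = (mulK F c) '' (L : Set (VV F)) from rfl,
    ← Submodule.map_coe, Submodule.span_eq]

theorem mem_scaleLat_iff {c : KK F} (hc : c ≠ 0) {L : Submodule (OO F) (VV F)} {x : VV F} :
    x ∈ scaleLat F c L ↔ ∃ y ∈ L, c • y = x := by
  rw [scaleLat_eq_map, Submodule.mem_map]
  rfl

theorem smul_mem_scaleLat (c : KK F) {L : Submodule (OO F) (VV F)} {x : VV F} (hx : x ∈ L) :
    c • x ∈ scaleLat F c L :=
  Submodule.subset_span ⟨x, hx, rfl⟩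

variable (F) in
/-- The set of `k` such that `π^k L ⊆ M`. -/
def aset (L M : Submodule (OO F) (VV F)) : Set ℤ := {k | ∀ x ∈ L, pZ F k • x ∈ M}

variable (F) in
/-- The least `k` such that `π^k L ⊆ M`. -/
def aInv (L M : Submodule (OO F) (VV F)) : ℤ := sInf (aset F L M)

theorem smul_shift_mem {M : Submodule (OO F) (VV F)} {y : VV F} {k k' : ℤ}
    (h : pZ F k • y ∈ M) (hk : k ≤ k') : pZ F k' • y ∈ M := by
  have h2 : pZ F (k' - k) ∈ OO F := pZ_mem _ (by omega)
  have h3 := smul_mem_of_mem_OO h2 h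
  have e : pZ F (k' - k) • pZ F k • y = pZ F k' • y := by
    funext i
    show pZ F (k' - k) * (pZ F k * y i) = pZ F k' * y i
    rw [← mul_assoc, pZ_mul, sub_add_cancel]
  rwa [e] at h3

theorem aset_upward {L M : Submodule (OO F) (VV F)} {k k' : ℤ}
    (hk : k ∈ aset F L M) (h : k ≤ k') : k' ∈ aset F L M :=
  fun x hx => smul_shift_mem (hk x hx) h

theorem finset_scal_bound (c : VV F →₀ KK F) (s : Finset (VV F)) :
    ∃ k : ℤ, ∀ v ∈ s, pZ F k * c v ∈ OO F := by
  classical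
  induction s using Finset.induction_on with
  | empty => exact ⟨0, by simp⟩
  | @insert a s ha ih =>
    obtain ⟨k1, hk1⟩ := ih
    obtain ⟨k2, hk2⟩ := exists_scal (c a)
    refine ⟨max k1 k2, fun v hv => ?_⟩
    rcases Finset.mem_insert.mp hv with rfl | hv
    · exact scal_up hk2 (le_max_right _ _)
    · exact scal_up (hk1 v hv) (le_max_left _ _)

theorem exists_single_smul_mem (M : Submodule (OO F) (VV F))
    (hM : Submodule.span (KK F) (M : Set (VV F)) = ⊤) (x : VV F) :
    ∃ k : ℤ, pZ F k • x ∈ M := by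
  classical
  have hx : x ∈ Submodule.span (KK F) (M : Set (VV F)) := by rw [hM]; trivial
  rw [Submodule.mem_span_set] at hx
  obtain ⟨c, hsupp, hsum⟩ := hx
  obtain ⟨k, hk⟩ := finset_scal_bound c c.support
  refine ⟨k, ?_⟩
  rw [← hsum, Finsupp.sum, Finset.smul_sum]
  apply Submodule.sum_mem
  intro v hv
  rw [smul_smul]
  exact smul_mem_of_mem_OO (hk v hv) (hsupp hv)

theorem finset_smul_bound (M : Submodule (OO F) (VV F))
    (hM : Submodule.span (KK F) (M : Set (VV F)) = ⊤) (T : Finset (VV F)) :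
    ∃ k : ℤ, ∀ t ∈ T, pZ F k • t ∈ M := by
  classical
  induction T using Finset.induction_on with
  | empty => exact ⟨0, by simp⟩
  | @insert a s ha ih =>
    obtain ⟨k1, hk1⟩ := ih
    obtain ⟨k2, hk2⟩ := exists_single_smul_mem M hM a
    refine ⟨max k1 k2, fun v hv => ?_⟩
    rcases Finset.mem_insert.mp hv with rfl | hv
    · exact smul_shift_mem hk2 (le_max_right _ _)
    · exact smul_shift_mem (hk1 v hv) (le_max_left _ _)

theorem aset_nonempty {L M : Submodule (OO F) (VV F)} (hL : L.FG)
    (hM : Submodule.span (KK F) (M : Set (VV F)) = ⊤) : (aset F L M).Nonempty := by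
  classical
  obtain ⟨T, hT⟩ := hL
  obtain ⟨k, hk⟩ := finset_smul_bound M hM T
  refine ⟨k, ?_⟩
  intro x hx
  rw [← hT] at hx
  have hle : (T : Set (VV F)) ⊆ (M.comap (mulK F (pZ F k)) : Set (VV F)) := fun t ht => hk t ht
  have := Submodule.span_le.mpr hle
  exact this hx

variable (F) in
/-- The set of vectors all whose components are in `π^{-N} O`. -/
def Wmod (N : ℤ) : Submodule (OO F) (VV F) where
  carrier := {y | ∀ i, pZ F N * y i ∈ OO F}
  zero_mem' := by intro i; simp only [Pi.zero_apply, mul_zero]; exact zero_mem _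
  add_mem' := by
    intro y z hy hz i
    rw [Pi.add_apply, mul_add]
    exact add_mem (hy i) (hz i)
  smul_mem' := by
    intro r y hy i
    have : pZ F N * (r • y) i = (r : KK F) * (pZ F N * y i) := by
      rw [Pi.smul_apply, OOsmul_scalar]; ring
    rw [this]
    exact mul_mem r.2 (hy i)

theorem Wmod_mono {N N' : ℤ} (h : N ≤ N') : Wmod F N ≤ Wmod F N' := by
  intro y hy i
  exact scal_up (hy i) h

theorem finset_Wmod_bound (T : Finset (VV F)) : ∃ N : ℤ, ∀ t ∈ T, t ∈ Wmod F N := by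
  classical
  induction T using Finset.induction_on with
  | empty => exact ⟨0, by simp⟩
  | @insert a s ha ih =>
    obtain ⟨N1, hN1⟩ := ih
    obtain ⟨k0, hk0⟩ := exists_scal (a 0)
    obtain ⟨k1, hk1⟩ := exists_scal (a 1)
    refine ⟨max N1 (max k0 k1), fun v hv => ?_⟩
    rcases Finset.mem_insert.mp hv with rfl | hv
    · intro i
      fin_cases i
      · exact scal_up hk0 (le_trans (le_max_left _ _) (le_max_right _ _))
      · exact scal_up hk1 (le_trans (le_max_right _ _) (le_max_right _ _))
    · exact Wmod_mono (le_max_left _ _) (hN1 v hv)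

theorem exists_upper (M : Submodule (OO F) (VV F)) (hM : M.FG) :
    ∃ N : ℤ, ∀ y ∈ M, ∀ i, pZ F N * y i ∈ OO F := by
  classical
  obtain ⟨T, hT⟩ := hM
  obtain ⟨N, hN⟩ := finset_Wmod_bound T
  refine ⟨N, fun y hy => ?_⟩
  rw [← hT] at hy
  exact Submodule.span_le.mpr (fun t ht => hN t ht) hy

theorem aset_bddBelow {L M : Submodule (OO F) (VV F)}
    (hL : Submodule.span (KK F) (L : Set (VV F)) = ⊤) (hM : M.FG) :
    BddBelow (aset F L M) := by
  have hx : ∃ x ∈ L, x ≠ 0 := by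
    by_contra hno
    push_neg at hno
    have hsub : (L : Set (VV F)) ⊆ ({0} : Set (VV F)) := fun x hx => hno x hx
    have h1 : Submodule.span (KK F) (L : Set (VV F)) ≤
        Submodule.span (KK F) ({0} : Set (VV F)) := Submodule.span_mono hsub
    rw [hL, Submodule.span_zero_singleton] at h1
    have h2 : (![(1 : KK F), 0] : VV F) ∈ (⊥ : Submodule (KK F) (VV F)) :=
      h1 Submodule.mem_top
    rw [Submodule.mem_bot] at h2
    have h3 := congrFun h2 0
    simp at h3
  obtain ⟨x₀, hx₀L, hx₀⟩ := hx
  obtain ⟨i₀, hi₀⟩ := Function.ne_iff.mp hx₀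
  rw [Pi.zero_apply] at hi₀
  obtain ⟨N, hN⟩ := exists_upper M hM
  refine ⟨-N - (x₀ i₀).order, fun k hk => ?_⟩
  have h1 := hN _ (hk x₀ hx₀L) i₀
  rw [Ksmul_comp, ← mul_assoc, pZ_mul] at h1
  rw [pZ_mul_mem_iff hi₀] at h1
  omega

theorem aInv_mem {L M : Submodule (OO F) (VV F)} (hne : (aset F L M).Nonempty)
    (hbd : BddBelow (aset F L M)) : aInv F L M ∈ aset F L M :=
  Int.csInf_mem hne hbd

theorem aInv_le_iff {L M : Submodule (OO F) (VV F)} (hne : (aset F L M).Nonempty)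
    (hbd : BddBelow (aset F L M)) {k : ℤ} : aInv F L M ≤ k ↔ k ∈ aset F L M := by
  constructor
  · intro h
    exact aset_upward (aInv_mem hne hbd) h
  · intro h
    exact csInf_le hbd h

-- ### chunk 4 : homothety invariance

theorem smul_smul_vec (a b : KK F) (y : VV F) : a • b • y = (a * b) • y := by
  funext i
  show a * (b * y i) = (a * b) * y i
  rw [mul_assoc]

theorem mem_aset_image_iff {L L' M : Submodule (OO F) (VV F)} {c : KK F} (hc : c ≠ 0)
    (hset : (L' : Set (VV F)) = (fun v => c • v) '' (L : Set (VV F))) (k : ℤ) :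
    k ∈ aset F L' M ↔ k + c.order ∈ aset F L M := by
  obtain ⟨u, u', huO, hu'O, huu', hu, hcu⟩ := exists_OO_inv c hc
  constructor
  · intro hk x hx
    have h1 : u' • x ∈ L := smul_mem_of_mem_OO hu'O hx
    have h2 : c • (u' • x) ∈ L' := by
      have : c • (u' • x) ∈ (L' : Set (VV F)) := by
        rw [hset]; exact ⟨u' • x, h1, rfl⟩
      exact this
    have h3 := hk _ h2
    have e : pZ F k • c • u' • x = pZ F (k + c.order) • x := by
      rw [smul_smul_vec, smul_smul_vec, mul_assoc, hcu, pZ_mul]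
    rwa [e] at h3
  · intro hk x' hx'
    have hx'' : x' ∈ (L' : Set (VV F)) := hx'
    rw [hset] at hx''
    obtain ⟨x, hx, rfl⟩ := hx''
    have h1 : u • x ∈ L := smul_mem_of_mem_OO huO hx
    have h3 := hk _ h1
    have e : pZ F (k + c.order) • u • x = pZ F k • c • x := by
      rw [smul_smul_vec, smul_smul_vec, hu, ← mul_assoc, pZ_mul]
      rw [show k + c.order + -c.order = k by ring]
    rwa [e] at h3

theorem mem_aset_image_iff' {L L' M : Submodule (OO F) (VV F)} {c : KK F} (hc : c ≠ 0)
    (hset : (L' : Set (VV F)) = (fun v => c • v) '' (L : Set (VV F))) (k : ℤ) :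
    k ∈ aset F M L' ↔ k - c.order ∈ aset F M L := by
  obtain ⟨u, u', huO, hu'O, huu', hu, hcu⟩ := exists_OO_inv c hc
  constructor
  · intro hk y hy
    have h1 : pZ F k • y ∈ (L' : Set (VV F)) := hk y hy
    rw [hset] at h1
    obtain ⟨x, hxL, hcx⟩ := h1
    have h2 : u • x ∈ L := smul_mem_of_mem_OO huO hxL
    have hcx' : c • x = pZ F k • y := hcx
    have e : u • x = pZ F (k - c.order) • y := by
      rw [hu, ← smul_smul_vec, hcx', smul_smul_vec, pZ_mul]
      rw [show -c.order + k = k - c.order by ring]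
    rwa [e] at h2
  · intro hk y hy
    have h1 : u' • y ∈ M := smul_mem_of_mem_OO hu'O hy
    have h2 := hk _ h1
    have h3 : c • (pZ F (k - c.order) • u' • y) ∈ (L' : Set (VV F)) := by
      rw [hset]; exact ⟨_, h2, rfl⟩
    have e : c • (pZ F (k - c.order) • u' • y) = pZ F k • y := by
      rw [smul_smul_vec, smul_smul_vec]
      congr 1
      rw [show c * pZ F (k - c.order) * u' = pZ F (k - c.order) * (c * u') by ring, hcu,
        pZ_mul, sub_add_cancel]
    rwa [e] at h3

theorem aInv_image {L L' M : Submodule (OO F) (VV F)} {c : KK F} (hc : c ≠ 0)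
    (hset : (L' : Set (VV F)) = (fun v => c • v) '' (L : Set (VV F)))
    (hL : IsLat F L) (hL' : IsLat F L') (hM : IsLat F M) :
    aInv F L' M = aInv F L M - c.order := by
  have i1 : ∀ k : ℤ, aInv F L' M ≤ k ↔ aInv F L M ≤ k + c.order := fun k => by
    rw [aInv_le_iff (aset_nonempty hL'.1 hM.2) (aset_bddBelow hL'.2 hM.1),
      mem_aset_image_iff hc hset,
      ← aInv_le_iff (aset_nonempty hL.1 hM.2) (aset_bddBelow hL.2 hM.1)]
  have h2 := (i1 (aInv F L' M)).mp le_rfl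
  have h3 := (i1 (aInv F L M - c.order)).mpr (by omega)
  omega

theorem aInv_image' {L L' M : Submodule (OO F) (VV F)} {c : KK F} (hc : c ≠ 0)
    (hset : (L' : Set (VV F)) = (fun v => c • v) '' (L : Set (VV F)))
    (hL : IsLat F L) (hL' : IsLat F L') (hM : IsLat F M) :
    aInv F M L' = aInv F M L + c.order := by
  have i1 : ∀ k : ℤ, aInv F M L' ≤ k ↔ aInv F M L ≤ k - c.order := fun k => by
    rw [aInv_le_iff (aset_nonempty hM.1 hL'.2) (aset_bddBelow hM.2 hL'.1),
      mem_aset_image_iff' hc hset,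
      ← aInv_le_iff (aset_nonempty hM.1 hL.2) (aset_bddBelow hM.2 hL.1)]
  have h2 := (i1 (aInv F M L')).mp le_rfl
  have h3 := (i1 (aInv F M L + c.order)).mpr (by omega)
  omega

variable (F) in
/-- The distance invariant of a lattice, relative to the standard lattice. -/
def Dl (L : Submodule (OO F) (VV F)) : ℤ :=
  aInv F L (Llat F 0 0) + aInv F (Llat F 0 0) L

theorem Dl_of_latEq {L L' : LatT F} (h : LatEq F L.1 L'.1) : Dl F L.1 = Dl F L'.1 := by
  obtain ⟨c, hset⟩ := h
  have hc : (c : KK F) ≠ 0 := Units.ne_zero c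
  have hM : IsLat F (Llat F 0 0) := isLat_Llat 0 0
  rw [Dl, Dl, aInv_image hc hset L.2 L'.2 hM, aInv_image' hc hset L.2 L'.2 hM]
  ring

variable (F) in
/-- The distance invariant on vertices. -/
def DV : Vertex F → ℤ :=
  Quot.lift (fun L : LatT F => Dl F L.1) (fun _ _ h => Dl_of_latEq h)

theorem DV_vtx (L : LatT F) : DV F (vtx F L) = Dl F L.1 := rfl

-- ### chunk 5 : computations and walks

theorem smul_pZ_pZ (a b : ℤ) (y : VV F) : pZ F a • pZ F b • y = pZ F (a + b) • y := by
  funext i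
  show pZ F a * (pZ F b * y i) = pZ F (a + b) * y i
  rw [← mul_assoc, pZ_mul]

theorem aset_pair_iff {v w : VV F} {M : Submodule (OO F) (VV F)} {k : ℤ} :
    k ∈ aset F (Submodule.span (OO F) {v, w}) M ↔ pZ F k • v ∈ M ∧ pZ F k • w ∈ M := by
  constructor
  · intro h
    exact ⟨h v (Submodule.subset_span (Set.mem_insert _ _)),
      h w (Submodule.subset_span (Set.mem_insert_of_mem _ rfl))⟩
  · rintro ⟨h1, h2⟩ x hx
    have hle : Submodule.span (OO F) {v, w} ≤ M.comap (mulK F (pZ F k)) := by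
      rw [Submodule.span_le]
      intro t ht
      rcases Set.mem_insert_iff.mp ht with rfl | ht
      · exact h1
      · rw [Set.mem_singleton_iff] at ht; subst ht; exact h2
    exact hle hx

theorem aset_Llat_M0 (m : ℤ) (g : KK F) :
    aset F (Llat F m g) (Llat F 0 0) = Set.Ici (max (max 0 (-m)) (-g.order)) := by
  ext k
  simp only [Set.mem_Ici]
  rw [Llat, aset_pair_iff]
  have c0 : (pZ F k • (![pZ F m, 0] : VV F)) 0 = pZ F (k + m) := by
    rw [Ksmul_comp]
    simp only [Matrix.cons_val_zero]
    rw [pZ_mul]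
  have c1 : (pZ F k • (![pZ F m, 0] : VV F)) 1 = 0 := by
    rw [Ksmul_comp]
    simp
  have d0 : (pZ F k • (![g, 1] : VV F)) 0 = pZ F k * g := by
    rw [Ksmul_comp]; simp
  have d1 : (pZ F k • (![g, 1] : VV F)) 1 = pZ F k := by
    rw [Ksmul_comp]; simp
  rw [mem_M0_iff, mem_M0_iff, c0, c1, d0, d1]
  by_cases hg : g = 0
  · subst hg
    rw [HahnSeries.order_zero, mul_zero]
    simp only [zero_mem, and_true, true_and, pZ_mem_iff]
    omega
  · rw [pZ_mul_mem_iff hg]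
    simp only [zero_mem, and_true, pZ_mem_iff]
    omega

theorem aset_M0_Llat (m : ℤ) (g : KK F) :
    aset F (Llat F 0 0) (Llat F m g) = Set.Ici (max (max 0 m) (m - g.order)) := by
  ext k
  simp only [Set.mem_Ici]
  rw [show Llat F 0 0 = Submodule.span (OO F) {![pZ F 0, 0], ![(0 : KK F), 1]} from rfl,
    aset_pair_iff]
  have c0 : (pZ F k • (![pZ F 0, 0] : VV F)) 0 = pZ F k * pZ F 0 := by
    rw [Ksmul_comp]; simp
  have c1 : (pZ F k • (![pZ F 0, 0] : VV F)) 1 = 0 := by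
    rw [Ksmul_comp]; simp
  have d0 : (pZ F k • (![(0 : KK F), 1] : VV F)) 0 = 0 := by
    rw [Ksmul_comp]; simp
  have d1 : (pZ F k • (![(0 : KK F), 1] : VV F)) 1 = pZ F k := by
    rw [Ksmul_comp]; simp
  rw [mem_Llat_iff, mem_Llat_iff, c0, c1, d0, d1]
  have e1 : pZ F (-m) * (pZ F k * pZ F 0 - g * 0) = pZ F (k - m) := by
    rw [mul_zero, sub_zero, pZ_mul, pZ_mul]
    congr 1
    ring
  have e2 : pZ F (-m) * (0 - g * pZ F k) = -(pZ F (k - m) * g) := by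
    rw [show pZ F (-m) * (0 - g * pZ F k) = -((pZ F (-m) * pZ F k) * g) by ring, pZ_mul]
    congr 3
    ring
  rw [e1, e2]
  have hneg : -(pZ F (k - m) * g) ∈ OO F ↔ pZ F (k - m) * g ∈ OO F := neg_mem_iff
  rw [hneg]
  by_cases hg : g = 0
  · subst hg
    rw [HahnSeries.order_zero, mul_zero]
    simp only [zero_mem, true_and, and_true, pZ_mem_iff]
    omega
  · rw [pZ_mul_mem_iff hg]
    simp only [zero_mem, true_and, pZ_mem_iff]
    omega

theorem Dl_Llat (m : ℤ) (g : KK F) :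
    Dl F (Llat F m g) = max (max 0 (-m)) (-g.order) + max (max 0 m) (m - g.order) := by
  rw [Dl, aInv, aInv, aset_Llat_M0, aset_M0_Llat, csInf_Ici, csInf_Ici]

theorem Dl_adj_le {L L' : Submodule (OO F) (VV F)} (hL : IsLat F L) (hL' : IsLat F L')
    (h1 : scaleLat F (pZ F 1) L ≤ L') (h2 : L' ≤ L) :
    Dl F L' ≤ Dl F L + 1 ∧ Dl F L ≤ Dl F L' + 1 := by
  have hM : IsLat F (Llat F 0 0) := isLat_Llat 0 0
  set M0 := Llat F 0 0 with hM0
  have i1 : aInv F L' M0 ≤ aInv F L M0 :=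
    csInf_le_csInf (aset_bddBelow hL'.2 hM.1) (aset_nonempty hL.1 hM.2)
      (fun k hk x hx => hk x (h2 hx))
  have i2 : aInv F L M0 ≤ aInv F L' M0 + 1 := by
    apply (aInv_le_iff (aset_nonempty hL.1 hM.2) (aset_bddBelow hL.2 hM.1)).mpr
    intro x hx
    have hmem := aInv_mem (aset_nonempty hL'.1 hM.2) (aset_bddBelow hL'.2 hM.1)
    have hsc : pZ F 1 • x ∈ L' := h1 (smul_mem_scaleLat _ hx)
    have h3 := hmem _ hsc
    rwa [smul_pZ_pZ] at h3
  have i3 : aInv F M0 L ≤ aInv F M0 L' :=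
    csInf_le_csInf (aset_bddBelow hM.2 hL.1) (aset_nonempty hM.1 hL'.2)
      (fun k hk y hy => h2 (hk y hy))
  have i4 : aInv F M0 L' ≤ aInv F M0 L + 1 := by
    apply (aInv_le_iff (aset_nonempty hM.1 hL'.2) (aset_bddBelow hM.2 hL'.1)).mpr
    intro y hy
    have hmem := aInv_mem (aset_nonempty hM.1 hL.2) (aset_bddBelow hM.2 hL.1)
    have h3 : pZ F 1 • (pZ F (aInv F M0 L) • y) ∈ L' := h1 (smul_mem_scaleLat _ (hmem y hy))
    rw [smul_pZ_pZ] at h3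
    rwa [show (1 : ℤ) + aInv F M0 L = aInv F M0 L + 1 by ring] at h3
  constructor
  · rw [Dl, Dl, ← hM0]; omega
  · rw [Dl, Dl, ← hM0]; omega

theorem adj_DV {x y : Vertex F} (h : (BT F).Adj x y) : |DV F x - DV F y| ≤ 1 := by
  rcases (show x ≠ y ∧ (AdjAux F x y ∨ AdjAux F y x) from h).2 with hA | hA <;> obtain ⟨L, L', hx, hy, hlt1, hlt2⟩ := hA
  · rw [← hx, ← hy, DV_vtx, DV_vtx]
    have := Dl_adj_le L.2 L'.2 hlt1.le hlt2.le
    rw [abs_le]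
    omega
  · rw [← hy, ← hx, DV_vtx, DV_vtx]
    have := Dl_adj_le L.2 L'.2 hlt1.le hlt2.le
    rw [abs_le]
    omega

theorem walk_DV {x y : Vertex F} (p : (BT F).Walk x y) :
    |DV F x - DV F y| ≤ (p.length : ℤ) := by
  induction p with
  | nil => simp
  | @cons u v w h p ih =>
    rw [SimpleGraph.Walk.length_cons]
    push_cast
    have h1 := adj_DV h
    have h2 := abs_sub_le (DV F u) (DV F v) (DV F w)
    linarith

theorem BT_adj_succ (m : ℤ) (g : KK F) :
    (BT F).Adj (vtx F ⟨Llat F (m + 1) g, isLat_Llat (m + 1) g⟩)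
      (vtx F ⟨Llat F m g, isLat_Llat m g⟩) := by
  show _ ≠ _ ∧ (AdjAux F _ _ ∨ AdjAux F _ _)
  constructor
  · intro heq
    have h1 := congrArg (DV F) heq
    rw [DV_vtx, DV_vtx, Dl_Llat, Dl_Llat] at h1
    omega
  · refine Or.inr ⟨⟨Llat F m g, isLat_Llat m g⟩, ⟨Llat F (m + 1) g, isLat_Llat (m + 1) g⟩,
      rfl, rfl, ?_, ?_⟩
    · rw [SetLike.lt_iff_le_and_exists]
      constructor
      · intro x hx
        rw [mem_scaleLat_iff (pZ_ne_zero 1)] at hx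
        obtain ⟨y, hyL, rfl⟩ := hx
        rw [mem_Llat_iff] at hyL
        obtain ⟨hy1, hy2⟩ := hyL
        rw [mem_Llat_iff]
        constructor
        · rw [Ksmul_comp]
          exact mul_mem (pZ_mem 1 (by omega)) hy1
        · rw [Ksmul_comp, Ksmul_comp]
          rw [show pZ F (-(m + 1)) * (pZ F 1 * y 0 - g * (pZ F 1 * y 1))
            = (pZ F (-(m + 1)) * pZ F 1) * (y 0 - g * y 1) by ring, pZ_mul,
            show -(m + 1) + 1 = -m by ring]
          exact hy2
      · refine ⟨![g, 1], ?_, ?_⟩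
        · rw [mem_Llat_iff]
          constructor
          · simp only [Matrix.cons_val_one, Matrix.head_cons]
            exact one_mem _
          · simp only [Matrix.cons_val_zero, Matrix.cons_val_one, Matrix.head_cons, mul_one,
              sub_self, mul_zero]
            exact zero_mem _
        · intro hmem
          rw [mem_scaleLat_iff (pZ_ne_zero 1)] at hmem
          obtain ⟨y, hyL, heq⟩ := hmem
          have e1 := congrFun heq 1
          rw [Ksmul_comp] at e1
          simp only [Matrix.cons_val_one, Matrix.head_cons] at e1
          have e2 : y 1 = pZ F (-1) := by
            calc y 1 = (pZ F (-1) * pZ F 1) * y 1 := by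
                  rw [pZ_mul, neg_add_cancel, pZ_zero, one_mul]
              _ = pZ F (-1) * (pZ F 1 * y 1) := by ring
              _ = pZ F (-1) := by rw [e1, Matrix.cons_val_zero, mul_one]
          rw [mem_Llat_iff] at hyL
          have := hyL.1
          rw [e2, pZ_mem_iff] at this
          omega
    · rw [SetLike.lt_iff_le_and_exists]
      constructor
      · intro x hx
        rw [mem_Llat_iff] at hx ⊢
        obtain ⟨h1, h2⟩ := hx
        refine ⟨h1, ?_⟩
        rw [show pZ F (-m) * (x 0 - g * x 1)
          = pZ F 1 * (pZ F (-(m + 1)) * (x 0 - g * x 1)) by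
            rw [← mul_assoc, pZ_mul, show (1 : ℤ) + -(m + 1) = -m by ring]]
        exact mul_mem (pZ_mem 1 (by omega)) h2
      · refine ⟨![pZ F m, 0], ?_, ?_⟩
        · rw [mem_Llat_iff]
          constructor
          · simp only [Matrix.cons_val_one, Matrix.head_cons]
            exact zero_mem _
          · simp only [Matrix.cons_val_zero, Matrix.cons_val_one, Matrix.head_cons, mul_zero,
              sub_zero]
            rw [pZ_mul, neg_add_cancel, pZ_zero]
            exact one_mem _
        · intro hmem
          rw [mem_Llat_iff] at hmem
          have h2 := hmem.2
          simp only [Matrix.cons_val_zero, Matrix.cons_val_one, Matrix.head_cons, mul_zero,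
            sub_zero] at h2
          rw [pZ_mul, pZ_mem_iff] at h2
          omega

theorem walk_down (g : KK F) (b : ℤ) :
    ∀ a : ℤ, b ≤ a → ∃ p : (BT F).Walk (vtx F ⟨Llat F a g, isLat_Llat a g⟩)
      (vtx F ⟨Llat F b g, isLat_Llat b g⟩), (p.length : ℤ) = a - b := by
  refine Int.le_induction ?_ ?_
  · exact ⟨SimpleGraph.Walk.nil, by simp⟩
  · rintro a ha ⟨p, hp⟩
    refine ⟨SimpleGraph.Walk.cons (BT_adj_succ a g) p, ?_⟩
    rw [SimpleGraph.Walk.length_cons]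
    push_cast
    omega

-- ### chunk 6 : degn

theorem degn_zero (n : ℤ) : degn F n 0 = 0 := by
  apply Nat.sInf_eq_zero.mpr
  left
  show pZ F (-(n - (0 : ℕ))) * 0 ∈ OO F
  rw [mul_zero]
  exact zero_mem _

theorem degn_eq {n : ℤ} {g : KK F} (hg : g ≠ 0) : (degn F n g : ℤ) = max 0 (n - g.order) := by
  have hset : {i : ℕ | pZ F (-(n - i)) * g ∈ OO F} = Set.Ici (n - g.order).toNat := by
    ext i
    simp only [Set.mem_setOf_eq, Set.mem_Ici, pZ_mul_mem_iff hg]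
    rw [Int.toNat_le]
    omega
  rw [degn, hset, csInf_Ici]
  omega

variable (F)
end Aux

/-- the distance in the Bruhat–Tits tree between the vertices
`[L(n,g)]` and `[L(0,0)]` equals `deg_n(g) + |n - deg_n(g)|`. -/
theorem dist_to_base_vertex (n : ℤ) (g : KK F)
    (h : IsLat F (Llat F n g)) (h0 : IsLat F (Llat F 0 0)) :
    ((BT F).dist (vtx F ⟨Llat F n g, h⟩) (vtx F ⟨Llat F 0 0, h0⟩) : ℤ)
      = degn F n g + |n - degn F n g| := by
  classical
  set x : Vertex F := vtx F ⟨Llat F n g, h⟩ with hx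
  set y : Vertex F := vtx F ⟨Llat F 0 0, h0⟩ with hy
  set ν : ℤ := g.order with hν
  set w : ℤ := min (min n 0) ν with hw
  -- the explicit walk
  obtain ⟨p₁, hp₁⟩ := walk_down g w n (by omega)
  obtain ⟨q, hq⟩ := walk_down (0 : KK F) w 0 (by omega)
  have hLw : Llat F w g = Llat F w 0 := by
    apply Llat_congr
    by_cases hg : g = 0
    · rw [hg, mul_zero]; exact zero_mem _
    · rw [pZ_mul_mem_iff hg]
      omega
  have hvtx : vtx F ⟨Llat F w 0, isLat_Llat w 0⟩ = vtx F ⟨Llat F w g, isLat_Llat w g⟩ := by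
    congr 1
    exact Subtype.ext hLw.symm
  let p₂ : (BT F).Walk (vtx F ⟨Llat F w g, isLat_Llat w g⟩)
      (vtx F ⟨Llat F 0 0, isLat_Llat 0 0⟩) := q.reverse.copy hvtx rfl
  let ptot : (BT F).Walk (vtx F ⟨Llat F n g, isLat_Llat n g⟩)
      (vtx F ⟨Llat F 0 0, isLat_Llat 0 0⟩) := p₁.append p₂
  -- upper bound
  have hub : ((BT F).dist x y : ℤ) ≤ (n - w) + (0 - w) := by
    have h1 : (BT F).dist x y ≤ ptot.length := SimpleGraph.dist_le ptot
    have h2 : ptot.length = p₁.length + q.length := by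
      show (p₁.append p₂).length = _
      rw [SimpleGraph.Walk.length_append]
      congr 1
      show (q.reverse.copy hvtx rfl).length = _
      rw [SimpleGraph.Walk.length_copy, SimpleGraph.Walk.length_reverse]
    rw [h2] at h1
    have h3 : ((BT F).dist x y : ℤ) ≤ (p₁.length : ℤ) + (q.length : ℤ) := by exact_mod_cast h1
    omega
  -- lower bound
  have hlb : max (max 0 (-n)) (-ν) + max (max 0 n) (n - ν) ≤ ((BT F).dist x y : ℤ) := by
    have hreach : (BT F).Reachable x y := ⟨ptot⟩
    obtain ⟨p, hp⟩ := hreach.exists_walk_length_eq_dist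
    have h1 := walk_DV p
    rw [hp] at h1
    have h2 : DV F x = max (max 0 (-n)) (-ν) + max (max 0 n) (n - ν) := by
      rw [hx, DV_vtx, Dl_Llat]
    have h3 : DV F y = 0 := by
      rw [hy, DV_vtx, Dl_Llat, HahnSeries.order_zero]
      omega
    rw [h2, h3, sub_zero] at h1
    rcases abs_cases (max (max 0 (-n)) (-ν) + max (max 0 n) (n - ν)) with ⟨he, _⟩ | ⟨he, _⟩ <;>
      omega
  by_cases hg : g = 0
  · rw [hg, degn_zero]
    have hν0 : ν = 0 := by rw [hν, hg, HahnSeries.order_zero]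
    push_cast
    rcases abs_cases (n - (0 : ℤ)) with ⟨he, _⟩ | ⟨he, _⟩ <;> omega
  · have hd := degn_eq (n := n) hg
    rcases abs_cases (n - (degn F n g : ℤ)) with ⟨he, _⟩ | ⟨he, _⟩ <;> omega
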